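/- In the setting of the previous matrix (rows 0..r given by evaluating power series p_0,...,p_n at x_0,...,x_r, lower rows constant in B): if the t-adic vanishing orders m_i = ord_t(p_i) satisfy m_0 > m_1 > ... > m_n, then the cofactor g with det(M) = g·∏_{i<j}(x_i − x_j) lies in the ideal of B[[x_0,...,x_r]] generated by the monomials of the specialized Schur polynomial σ_m(x_0,...,x_r,1,...,1), where m = (m_0,...,m_n). -/

import Mathlib

open MvPolynomial
open Classical

/-- The Schur polynomial in variables `x_0, …, x_n` associated to the Young
diagram `μ`, defined as a sum over semistandard fillings with entries in
`{0, …, n}`. -/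
noncomputable def schurPoly (n : ℕ) (μ : YoungDiagram) :
    MvPolynomial (Fin (n + 1)) ℤ :=
  ∑ T ∈ Finset.univ.filter
      (fun T : μ.cells → Fin (n + 1) =>
        (∀ c c' : μ.cells, (c : ℕ × ℕ).1 = (c' : ℕ × ℕ).1 →
          (c : ℕ × ℕ).2 ≤ (c' : ℕ × ℕ).2 → T c ≤ T c') ∧
        (∀ c c' : μ.cells, (c : ℕ × ℕ).2 = (c' : ℕ × ℕ).2 →
          (c : ℕ × ℕ).1 < (c' : ℕ × ℕ).1 → T c < T c')),
    ∏ c : μ.cells, X (T c)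

/-- Substitution of `1` for the variables of index `> r`. -/
noncomputable def specializeLast (n r : ℕ) :
    MvPolynomial (Fin (n + 1)) ℤ →ₐ[ℤ] MvPolynomial (Fin (r + 1)) ℤ :=
  aeval (fun i : Fin (n + 1) =>
    if h : (i : ℕ) < r + 1 then X ⟨(i : ℕ), h⟩ else 1)

/-- The multivariate power series `p(x_i)` obtained by substituting the single
variable `x_i` into a one-variable power series `p`. -/
noncomputable def evalAtVar {B : Type*} [CommRing B] {σ : Type*} [DecidableEq σ]
    (i : σ) (p : PowerSeries B) : MvPowerSeries σ B :=
  fun d : σ →₀ ℕ =>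
    if ∀ j : σ, j ≠ i → d j = 0 then PowerSeries.coeff (R := B) (d i) p else 0


/-!
Write `D = det M`. Row `k ≤ r` of `M` only involves the variable `x_k` and the other rows are
constant, so the coefficient of `x^f` in `D` is the determinant of a matrix of coefficients of
the `p_j`. Hence every exponent `f` of `D` has pairwise distinct entries, and
`f x ≥ m (em x)` for some injection `em`.

Dividing `D` by the factors `x_a - x_b` of the Vandermonde product one at a time shows that each
exponent `e` of `g` yields an exponent `f` of `D`, obtained from `e` by adding, for every factor,
one to the exponent of `x_a` and moving some exponent from `x_b` to `x_a`. Ordering the variables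
so that `e` decreases and writing each factor with `a` before `b`, this gives `e + δ ≤ f` in the
dominance order, `δ = (r, r - 1, …, 0)`. If `λ + δ` is the decreasing rearrangement of `f`, then
`λ` is a partition dominating `e`, so by the Kostka criterion (proved by peeling off the largest
entry as a horizontal strip) some semistandard tableau of shape `λ` has content `e`. By
pigeonhole `λ` contains `κ_j = μ_{j + n - r}`; restricting the tableau to `κ` and filling the
remaining cells of `μ` with the entries `r + 1, …, n` gives a tableau of shape `μ` whose
specialized monomial divides `x^e`.
-/

theorem Finsupp.sum_add_le_sum_of_add_single_eq {σ : Type*} {i j : σ} {k : ℕ} {e f : σ →₀ ℕ}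
    (h : f + Finsupp.single j k = e + Finsupp.single i (k + 1)) (L : Finset σ)
    (hL : j ∈ L → i ∈ L) : ∑ x ∈ L, e x + (if i ∈ L then 1 else 0) ≤ ∑ x ∈ L, f x := by
  classical
  have hsum := congrArg (fun d : σ →₀ ℕ => ∑ x ∈ L, d x) h
  simp only [Finsupp.add_apply, Finset.sum_add_distrib, Finsupp.single_apply,
    Finset.sum_ite_eq] at hsum
  split_ifs at hsum ⊢ <;> grind

theorem Finsupp.eq_filter_of_sum_eq {σ ι : Type*} [Fintype ι] {V : ι → Set σ}
    (hV : Pairwise fun i j => Disjoint (V i) (V j)) {e : σ →₀ ℕ} {l : ι → σ →₀ ℕ}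
    (hl : ∀ k, ∀ y ∉ V k, l k y = 0) (hsum : ∑ k, l k = e) (k : ι) :
    l k = e.filter (· ∈ V k) := by
  ext y
  rw [Finsupp.filter_apply, ← hsum, Finsupp.finsetSum_apply]
  split_ifs with hy
  · rw [Finset.sum_eq_single k (fun j _ hjk => hl j y fun hj => (hV hjk).ne_of_mem hj hy rfl)
      (by simp)]
  · exact hl k y hy

theorem Fin.prod_Ioi_sub_comp_perm {R : Type*} [CommRing R] {N : ℕ} (v : Fin N → R)
    (ρ : Equiv.Perm (Fin N)) :
    ∏ i, ∏ j ∈ Finset.Ioi i, (v (ρ i) - v (ρ j)) =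
      Equiv.Perm.sign ρ • ∏ i, ∏ j ∈ Finset.Ioi i, (v i - v j) := by
  have hdet : ∀ w : Fin N → R,
      ∏ i, ∏ j ∈ Finset.Ioi i, (w i - w j) = (Matrix.vandermonde (-w)).det := by
    simp [Matrix.det_vandermonde, neg_add_eq_sub]
  have hperm : Matrix.vandermonde (-fun i => v (ρ i)) =
      (Matrix.vandermonde (-v)).submatrix ρ id := by
    ext
    simp
  rw [hdet, hdet, hperm, Matrix.det_permute, Units.smul_def, zsmul_eq_mul]

namespace MvPowerSeries

variable {σ R : Type*} [CommRing R]

theorem exists_add_single_eq_of_coeff_mul_X_ne_zero {φ : MvPowerSeries σ R} {j : σ}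
    {d : σ →₀ ℕ} (h : coeff d (φ * X j) ≠ 0) :
    ∃ d', coeff d' φ ≠ 0 ∧ d' + Finsupp.single j 1 = d := by
  classical
  rw [X_def, coeff_mul_monomial] at h
  split_ifs at h with hle
  · exact ⟨d - Finsupp.single j 1, by simpa using h, tsub_add_cancel_of_le hle⟩
  · exact absurd rfl h

/-- If the coefficient of `φ * (X i - X j)` at `e + single i 1` vanishes, then `φ` has the same
coefficient at `e + single i 1 - single j 1`; the `j`-exponent cannot drop forever. -/
theorem exists_coeff_mul_X_sub_X_ne_zero {φ : MvPowerSeries σ R} {i j : σ} (hij : i ≠ j)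
    {e : σ →₀ ℕ} (he : coeff e φ ≠ 0) :
    ∃ k f, coeff f (φ * (X i - X j)) ≠ 0 ∧
      f + Finsupp.single j k = e + Finsupp.single i (k + 1) := by
  classical
  obtain ⟨N, hN⟩ : ∃ N, e j = N := ⟨_, rfl⟩
  induction N using Nat.strong_induction_on generalizing e with
  | _ N ih =>
    by_cases hF : coeff (e + Finsupp.single i 1) (φ * (X i - X j)) = 0
    swap
    · exact ⟨0, _, hF, by simp⟩
    have hXj : coeff (e + Finsupp.single i 1) (φ * X j) ≠ 0 := by
      rw [mul_sub, map_sub, X_def i, coeff_add_mul_monomial, mul_one, sub_eq_zero, eq_comm] at hF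
      rwa [hF]
    obtain ⟨e', he', hsum⟩ := exists_add_single_eq_of_coeff_mul_X_ne_zero hXj
    have hj : e' j + 1 = N := by
      simpa [Finsupp.single_apply, hij, hN] using DFunLike.congr_fun hsum j
    obtain ⟨k, f, hf, heq⟩ := ih (e' j) (by omega) he' rfl
    refine ⟨k + 1, f, hf, ?_⟩
    ext x
    have h1 := DFunLike.congr_fun heq x
    have h2 := DFunLike.congr_fun hsum x
    simp only [Finsupp.add_apply, Finsupp.single_apply] at h1 h2 ⊢
    split_ifs at h1 h2 ⊢ <;> omega

theorem exists_coeff_mul_prod_X_sub_X_ne_zero {ι : Type*} (s : Finset ι) {a b : ι → σ}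
    (hab : ∀ q ∈ s, a q ≠ b q) {φ : MvPowerSeries σ R} {e : σ →₀ ℕ} (he : coeff e φ ≠ 0) :
    ∃ f, coeff f (φ * ∏ q ∈ s, (X (a q) - X (b q))) ≠ 0 ∧ f.degree = e.degree + s.card ∧
      ∀ L : Finset σ, (∀ q ∈ s, b q ∈ L → a q ∈ L) →
        ∑ x ∈ L, e x + (s.filter (a · ∈ L)).card ≤ ∑ x ∈ L, f x := by
  classical
  induction s using Finset.induction_on generalizing φ e with
  | empty => exact ⟨e, by simpa using he, by simp, fun L _ => by simp⟩
  | @insert q s hq ih =>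
    obtain ⟨k, e', he', heq⟩ :=
      exists_coeff_mul_X_sub_X_ne_zero (hab q (s.mem_insert_self q)) he
    obtain ⟨f, hf, hdeg, hL⟩ := ih (fun q' hq' => hab q' (Finset.mem_insert_of_mem hq')) he'
    refine ⟨f, by rwa [Finset.prod_insert hq, ← mul_assoc], ?_, fun L hL' => ?_⟩
    · have := congrArg Finsupp.degree heq
      simp only [map_add, Finsupp.degree_single] at this
      rw [hdeg, Finset.card_insert_of_notMem hq]
      omega
    · have h1 := Finsupp.sum_add_le_sum_of_add_single_eq heq L (hL' q (s.mem_insert_self q))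
      have h2 := hL L fun q' hq' => hL' q' (Finset.mem_insert_of_mem hq')
      rw [Finset.filter_insert]
      split_ifs at h1 ⊢ with h
      · rw [Finset.card_insert_of_notMem fun h' => hq (Finset.mem_filter.mp h').1]
        omega
      · omega

theorem coeff_prod_of_disjoint {ι : Type*} [Fintype ι] (F : ι → MvPowerSeries σ R)
    {V : ι → Set σ} (hV : Pairwise fun i j => Disjoint (V i) (V j))
    (hF : ∀ k d, coeff d (F k) ≠ 0 → ∀ y ∉ V k, d y = 0) {e : σ →₀ ℕ}
    (he : ∀ y, e y ≠ 0 → ∃ k, y ∈ V k) :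
    coeff e (∏ k, F k) = ∏ k, coeff (e.filter (· ∈ V k)) (F k) := by
  classical
  set l₀ : ι →₀ σ →₀ ℕ := Finsupp.equivFunOnFinite.symm fun k => e.filter (· ∈ V k)
  have hl₀ : ∑ k, l₀ k = e := by
    ext y
    simp only [l₀, Finsupp.coe_equivFunOnFinite_symm, Finsupp.finsetSum_apply,
      Finsupp.filter_apply]
    by_cases hy : e y = 0
    · simp [hy]
    obtain ⟨k, hk⟩ := he y hy
    rw [Finset.sum_eq_single k (fun j _ hjk => if_neg fun hj => (hV hjk).ne_of_mem hj hk rfl)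
      (by simp), if_pos hk]
  rw [coeff_prod, Finset.sum_eq_single l₀]
  · rfl
  · intro l hl hne
    by_contra hprod
    refine hne (Finsupp.ext fun k => ?_)
    refine Finsupp.eq_filter_of_sum_eq hV (fun k y hy => ?_) (by simpa using hl) k
    exact hF k (l k) (fun h => hprod (Finset.prod_eq_zero (Finset.mem_univ k) h)) y hy
  · intro h
    exact absurd (by simpa using hl₀) h

theorem monomial_one_dvd_of_forall_coeff_ne_zero {d : σ →₀ ℕ} {ψ : MvPowerSeries σ R}
    (h : ∀ e, coeff e ψ ≠ 0 → d ≤ e) : monomial d (1 : R) ∣ ψ := by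
  let q : MvPowerSeries σ R := fun y => coeff (d + y) ψ
  have hq : ∀ y, coeff y q = coeff (d + y) ψ := fun _ => rfl
  refine ⟨q, ?_⟩
  ext e
  rw [coeff_monomial_mul, hq]
  split_ifs with hde
  · rw [one_mul, add_tsub_cancel_of_le hde]
  · by_contra hne
    exact hde (h e hne)

theorem mem_span_monomial_of_forall_exists_le (S : Finset (σ →₀ ℕ)) {g : MvPowerSeries σ R}
    (hg : ∀ e, coeff e g ≠ 0 → ∃ d ∈ S, d ≤ e) :
    g ∈ Ideal.span ((fun d => monomial d (1 : R)) '' S) := by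
  classical
  choose! c hcS hce using hg
  set part : (σ →₀ ℕ) → MvPowerSeries σ R := fun d e => if c e = d then coeff e g else 0
  have hsum : g = ∑ d ∈ S, part d := by
    ext e
    simp only [map_sum]
    change _ = ∑ d ∈ S, if c e = d then coeff e g else 0
    rw [Finset.sum_ite_eq]
    split_ifs with h
    · rfl
    · by_contra hne
      exact h (hcS e hne)
  rw [hsum]
  refine Ideal.sum_mem _ fun d hd => Ideal.mem_of_dvd _ ?_ (Ideal.subset_span ⟨d, hd, rfl⟩)
  refine monomial_one_dvd_of_forall_coeff_ne_zero fun e he => ?_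
  change (if c e = d then coeff e g else 0) ≠ 0 at he
  split_ifs at he with h
  · exact h ▸ hce e he
  · exact absurd rfl he

theorem prod_X_pow_eq_monomial [Fintype σ] (d : σ →₀ ℕ) :
    ∏ i, (X i : MvPowerSeries σ R) ^ d i = monomial d 1 := by
  simp_rw [X_pow_eq, prod_monomial, Finsupp.univ_sum_single, Finset.prod_const_one]

end MvPowerSeries

theorem Finset.sum_le_sum_range_card_of_antitone {a : ℕ → ℕ} (ha : Antitone a) (s : Finset ℕ) :
    ∑ i ∈ s, a i ≤ ∑ i ∈ Finset.range s.card, a i := by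
  induction s using Finset.induction_on_max with
  | empty => simp
  | insert x s hx ih =>
    have hxs : x ∉ s := fun h => (hx x h).false
    have hcard : s.card ≤ x := by
      simpa using Finset.card_le_card fun y hy => Finset.mem_range.mpr (hx y hy)
    rw [Finset.sum_insert hxs, Finset.card_insert_of_notMem hxs, Finset.sum_range_succ]
    have := ha hcard
    omega

theorem apply_add_le_apply_add_of_succ_lt {a : ℕ → ℕ} {r : ℕ} (ha : ∀ j < r, a (j + 1) < a j)
    {i j : ℕ} (hij : i ≤ j) (hj : j ≤ r) : a j + j ≤ a i + i := by
  induction j, hij using Nat.le_induction with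
  | base => exact le_rfl
  | succ j _ ih =>
    have := ha j (by omega)
    have := ih (by omega)
    omega

theorem sum_range_sub_add_sum_range {a : ℕ → ℕ} {r : ℕ} (ha : ∀ j, r - j ≤ a j) (k : ℕ) :
    ∑ j ∈ Finset.range k, (a j - (r - j)) + ∑ j ∈ Finset.range k, (r - j) =
      ∑ j ∈ Finset.range k, a j := by
  rw [← Finset.sum_add_distrib]
  exact Finset.sum_congr rfl fun j _ => Nat.sub_add_cancel (ha j)

theorem exists_antitone_comp_perm {N : ℕ} (g : Fin N → ℕ) :
    ∃ π : Equiv.Perm (Fin N), Antitone (g ∘ π) :=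
  ⟨Fin.revPerm.trans (Tuple.sort g), fun _ _ hij =>
    Tuple.monotone_sort g (by simpa [Fin.revPerm_apply] using Fin.rev_le_rev.mpr hij)⟩

def natExtend {N : ℕ} (a : Fin N → ℕ) (j : ℕ) : ℕ :=
  if h : j < N then a ⟨j, h⟩ else 0

section natExtend

variable {N : ℕ} (a : Fin N → ℕ)

@[simp]
theorem natExtend_val (i : Fin N) : natExtend a i = a i := by
  simp [natExtend]

theorem natExtend_of_le {j : ℕ} (hj : N ≤ j) : natExtend a j = 0 := by
  simp [natExtend, hj.not_gt]

theorem sum_range_natExtend (k : ℕ) :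
    ∑ j ∈ Finset.range k, natExtend a j =
      ∑ i ∈ Finset.univ.filter (fun i : Fin N => ↑i < k), a i := by
  rw [← Finset.sum_filter_of_ne (p := (· < N)) fun j _ h => by
    by_contra hj
    exact h (natExtend_of_le a (not_lt.mp hj))]
  have : (Finset.range k).filter (· < N) =
      (Finset.univ.filter (fun i : Fin N => ↑i < k)).map Fin.valEmbedding := by
    ext j
    simp only [Finset.mem_filter, Finset.mem_range, Finset.mem_map, Finset.mem_univ, true_and,
      Fin.valEmbedding_apply]
    exact ⟨fun h => ⟨⟨j, h.2⟩, h.1, rfl⟩, by rintro ⟨i, hi, rfl⟩; exact ⟨hi, i.isLt⟩⟩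
  rw [this, Finset.sum_map]
  simp

theorem sum_range_natExtend_self : ∑ j ∈ Finset.range N, natExtend a j = ∑ i, a i := by
  rw [sum_range_natExtend]
  congr
  ext i
  simp

theorem antitone_natExtend {a : Fin N → ℕ} (ha : Antitone a) : Antitone (natExtend a) := by
  intro i j hij
  by_cases hj : j < N
  · simp only [natExtend, dif_pos hj, dif_pos (lt_of_le_of_lt hij hj)]
    exact ha (Fin.mk_le_mk.mpr hij)
  · simp [natExtend_of_le a (not_lt.mp hj)]

/-- Any `#A` values of `a` sum to at most its `#A` largest values. -/
theorem sum_natExtend_le_sum_range_card {π : Equiv.Perm (Fin N)} (hπ : Antitone (a ∘ π))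
    (A : Finset ℕ) :
    ∑ j ∈ A, natExtend a j ≤ ∑ j ∈ Finset.range A.card, natExtend (a ∘ π) j := by
  let τ : ℕ → ℕ := fun j => if h : j < N then π.symm ⟨j, h⟩ else j
  have hτ : Function.Injective τ := by
    intro i j hij
    simp only [τ] at hij
    split_ifs at hij with hi hj hj
    · simpa using π.symm.injective (Fin.ext hij)
    · have := (π.symm ⟨i, hi⟩).isLt
      omega
    · have := (π.symm ⟨j, hj⟩).isLt
      omega
    · exact hij
  have hval : ∀ j, natExtend a j = natExtend (a ∘ π) (τ j) := by
    intro j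
    by_cases hj : j < N
    · simp [τ, hj, natExtend]
    · simp [τ, hj, natExtend_of_le _ (not_lt.mp hj)]
  calc ∑ j ∈ A, natExtend a j = ∑ j ∈ A.map ⟨τ, hτ⟩, natExtend (a ∘ π) j := by
        simp [Finset.sum_map, hval]
    _ ≤ _ := by
        simpa using Finset.sum_le_sum_range_card_of_antitone (antitone_natExtend hπ)
          (A.map ⟨τ, hτ⟩)

end natExtend

theorem Fin.card_filter_sigma_Ioi {r : ℕ} (k : ℕ) :
    ((Finset.univ.sigma fun i : Fin (r + 1) => Finset.Ioi i).filter fun q => (q.1 : ℕ) < k).card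
      = ∑ j ∈ Finset.range k, (r - j) := by
  have hS : ((Finset.univ.sigma fun i : Fin (r + 1) => Finset.Ioi i).filter
      fun q => (q.1 : ℕ) < k) = (Finset.univ.filter fun i : Fin (r + 1) => ↑i < k).sigma
        fun i => Finset.Ioi i := by
    ext q
    simp [and_comm]
  have hext : ∀ j, natExtend (fun i : Fin (r + 1) => r - ↑i) j = r - j := fun j => by
    unfold natExtend
    split_ifs
    · rfl
    · omega
  rw [hS, Finset.card_sigma, Finset.sum_congr rfl fun j _ => (hext j).symm,
    sum_range_natExtend]
  exact Finset.sum_congr rfl fun i _ => by rw [Fin.card_Ioi]; rfl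

/-- Orienting the Vandermonde product along `ρ` makes the dominance statement of
`exists_coeff_mul_prod_X_sub_X_ne_zero` one about the prefixes `ρ 0, …, ρ (k - 1)`. -/
theorem MvPowerSeries.exists_dominating_of_eq_mul_prod_X_sub_X {R : Type*} [CommRing R] {r : ℕ}
    {D g : MvPowerSeries (Fin (r + 1)) R}
    (hD : D = g * ∏ i, ∏ j ∈ Finset.Ioi i, (X i - X j)) {e : Fin (r + 1) →₀ ℕ}
    (he : coeff e g ≠ 0) (ρ : Equiv.Perm (Fin (r + 1))) :
    ∃ f : Fin (r + 1) →₀ ℕ, coeff f D ≠ 0 ∧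
      ∑ i, f i = ∑ i, e i + ∑ j ∈ Finset.range (r + 1), (r - j) ∧
      ∀ k, ∑ j ∈ Finset.range k, natExtend (e ∘ ρ) j + ∑ j ∈ Finset.range k, (r - j) ≤
        ∑ j ∈ Finset.range k, natExtend (f ∘ ρ) j := by
  set S := Finset.univ.sigma fun i : Fin (r + 1) => Finset.Ioi i
  have hD' : D = (Equiv.Perm.sign ρ • g) * ∏ q ∈ S, (X (ρ q.1) - X (ρ q.2)) := by
    have hu : ((Equiv.Perm.sign ρ : ℤ) : MvPowerSeries (Fin (r + 1)) R) *
        (Equiv.Perm.sign ρ : ℤ) = 1 := by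
      rw [← Int.cast_mul, ← Units.val_mul, Int.units_mul_self, Units.val_one, Int.cast_one]
    rw [Finset.prod_sigma, Fin.prod_Ioi_sub_comp_perm (fun i => X i) ρ, hD, Units.smul_def,
      Units.smul_def, zsmul_eq_mul, zsmul_eq_mul]
    linear_combination (-(g * ∏ i, ∏ j ∈ Finset.Ioi i, (X i - X j))) * hu
  have he' : coeff e (Equiv.Perm.sign ρ • g) ≠ 0 := by
    rwa [Units.smul_def, map_zsmul, ← Units.smul_def, smul_ne_zero_iff_ne]
  obtain ⟨f, hf, hdeg, hL⟩ := exists_coeff_mul_prod_X_sub_X_ne_zero S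
    (fun q hq => ρ.injective.ne (Fin.ne_of_lt (Finset.mem_Ioi.mp (Finset.mem_sigma.mp hq).2))) he'
  refine ⟨f, hD' ▸ hf, ?_, fun k => ?_⟩
  · rw [Finsupp.degree_eq_sum, Finsupp.degree_eq_sum] at hdeg
    rwa [← Fin.card_filter_sigma_Ioi, Finset.filter_true_of_mem fun q _ => q.1.isLt]
  · set L := (Finset.univ.filter fun i : Fin (r + 1) => ↑i < k).map ρ.toEmbedding
    have hmem : ∀ i, ρ i ∈ L ↔ ↑i < k := by simp [L]
    have h := hL L fun q hq h2 => (hmem _).mpr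
      (lt_trans (Fin.lt_def.mp (Finset.mem_Ioi.mp (Finset.mem_sigma.mp hq).2)) ((hmem _).mp h2))
    have hsum : ∀ d : Fin (r + 1) →₀ ℕ,
        ∑ x ∈ L, d x = ∑ j ∈ Finset.range k, natExtend (d ∘ ρ) j := fun d => by
      rw [Finset.sum_map, sum_range_natExtend]
      rfl
    simp_rw [hmem] at h
    rwa [hsum, hsum, Fin.card_filter_sigma_Ioi] at h

section Alternant

variable {B : Type*} [CommRing B]

theorem coeff_evalAtVar {σ : Type*} [DecidableEq σ] (x : σ) (q : PowerSeries B) (d : σ →₀ ℕ) :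
    MvPowerSeries.coeff d (evalAtVar x q) =
      if ∀ y, y ≠ x → d y = 0 then PowerSeries.coeff (d x) q else 0 :=
  rfl

theorem coeff_filter_evalAtVar {σ : Type*} [DecidableEq σ] (x : σ) (q : PowerSeries B)
    (e : σ →₀ ℕ) :
    MvPowerSeries.coeff (e.filter (· = x)) (evalAtVar x q) = PowerSeries.coeff (e x) q := by
  rw [coeff_evalAtVar, if_pos fun y hy => by simp [hy]]
  simp

variable {n r : ℕ}

/-- When row `k` of `M` only involves `x_k` (no variable at all if `k ≥ r`), the coefficient of
`x^e` in `det M` is the determinant of this matrix. -/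
noncomputable def coeffMatrix (M : Matrix (Fin n) (Fin n) (MvPowerSeries (Fin r) B))
    (e : Fin r →₀ ℕ) : Matrix (Fin n) (Fin n) B :=
  Matrix.of fun k l => MvPowerSeries.coeff (e.filter fun y : Fin r => (y : ℕ) = k) (M k l)

theorem coeff_det_eq_det_coeffMatrix (M : Matrix (Fin n) (Fin n) (MvPowerSeries (Fin r) B))
    (hM : ∀ k l d, MvPowerSeries.coeff d (M k l) ≠ 0 → ∀ y : Fin r, (y : ℕ) ≠ k → d y = 0)
    (hrn : r ≤ n) (e : Fin r →₀ ℕ) :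
    MvPowerSeries.coeff e M.det = (coeffMatrix M e).det := by
  rw [Matrix.det_apply, Matrix.det_apply, map_sum]
  refine Finset.sum_congr rfl fun ς _ => ?_
  rw [Units.smul_def, Units.smul_def, zsmul_eq_mul, zsmul_eq_mul, ← map_intCast
    (MvPowerSeries.C (σ := Fin r) (R := B)), MvPowerSeries.coeff_C_mul]
  congr 1
  convert MvPowerSeries.coeff_prod_of_disjoint (fun i => M (ς i) i)
    (V := fun i => {y : Fin r | (y : ℕ) = ς i})
    (fun i j hij => Set.disjoint_left.mpr fun y hi hj =>
      hij (ς.injective (Fin.ext (hi.symm.trans hj))))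
    (fun i d hd y hy => hM _ _ d hd y hy) (fun y _ => ⟨ς.symm (Fin.castLE hrn y), by simp⟩)
  simp only [coeffMatrix, Matrix.of_apply, Set.mem_ofPred_eq]
  congr

theorem coeffMatrix_castLE (hr : r ≤ n) {p : Fin (n + 1) → PowerSeries B}
    {M : Matrix (Fin (n + 1)) (Fin (n + 1)) (MvPowerSeries (Fin (r + 1)) B)}
    (hrows : ∀ i : Fin (n + 1), ∀ h : (i : ℕ) < r + 1, ∀ j : Fin (n + 1),
      M i j = evalAtVar (⟨(i : ℕ), h⟩ : Fin (r + 1)) (p j))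
    (e : Fin (r + 1) →₀ ℕ) (x : Fin (r + 1)) (l : Fin (n + 1)) :
    coeffMatrix M e (Fin.castLE (by omega) x) l = PowerSeries.coeff (e x) (p l) := by
  rw [coeffMatrix, Matrix.of_apply, hrows _ x.isLt, ← coeff_filter_evalAtVar]
  congr 2
  ext y
  simp [Fin.ext_iff]

theorem eq_zero_of_coeff_entry_ne_zero {p : Fin (n + 1) → PowerSeries B}
    {M : Matrix (Fin (n + 1)) (Fin (n + 1)) (MvPowerSeries (Fin (r + 1)) B)}
    (hrows : ∀ i : Fin (n + 1), ∀ h : (i : ℕ) < r + 1, ∀ j : Fin (n + 1),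
      M i j = evalAtVar (⟨(i : ℕ), h⟩ : Fin (r + 1)) (p j))
    (hconst : ∀ i : Fin (n + 1), r + 1 ≤ (i : ℕ) → ∀ j : Fin (n + 1),
      ∃ b : B, M i j = MvPowerSeries.C (σ := Fin (r + 1)) (R := B) b)
    (k l : Fin (n + 1)) (d : Fin (r + 1) →₀ ℕ) (hd : MvPowerSeries.coeff d (M k l) ≠ 0)
    (y : Fin (r + 1)) (hy : (y : ℕ) ≠ k) : d y = 0 := by
  by_cases hk : (k : ℕ) < r + 1
  · rw [hrows k hk l, coeff_evalAtVar] at hd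
    split_ifs at hd with hvar
    · exact hvar y fun h => hy (by simp [h])
    · exact absurd rfl hd
  · obtain ⟨b, hb⟩ := hconst k (by omega) l
    rw [hb, MvPowerSeries.coeff_C] at hd
    split_ifs at hd with hd0
    · simp [hd0]
    · exact absurd rfl hd

theorem injective_and_exists_embedding_of_coeff_det_ne_zero (hr : r ≤ n)
    {p : Fin (n + 1) → PowerSeries B}
    {M : Matrix (Fin (n + 1)) (Fin (n + 1)) (MvPowerSeries (Fin (r + 1)) B)}
    (hrows : ∀ i : Fin (n + 1), ∀ h : (i : ℕ) < r + 1, ∀ j : Fin (n + 1),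
      M i j = evalAtVar (⟨(i : ℕ), h⟩ : Fin (r + 1)) (p j))
    (hconst : ∀ i : Fin (n + 1), r + 1 ≤ (i : ℕ) → ∀ j : Fin (n + 1),
      ∃ b : B, M i j = MvPowerSeries.C (σ := Fin (r + 1)) (R := B) b)
    {m : Fin (n + 1) → ℕ} (hord : ∀ i : Fin (n + 1), (p i).order = (m i : ℕ∞))
    {f : Fin (r + 1) →₀ ℕ} (hf : MvPowerSeries.coeff f M.det ≠ 0) :
    Function.Injective f ∧ ∃ em : Fin (r + 1) ↪ Fin (n + 1), ∀ x, m (em x) ≤ f x := by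
  have hrn : r + 1 ≤ n + 1 := by omega
  rw [coeff_det_eq_det_coeffMatrix M (eq_zero_of_coeff_entry_ne_zero hrows hconst) hrn] at hf
  constructor
  · intro x x' hxx'
    by_contra hne
    refine hf (Matrix.det_zero_of_row_eq (i := Fin.castLE hrn x) (j := Fin.castLE hrn x')
      (fun h => hne (Fin.castLE_injective hrn h)) (funext fun l => ?_))
    rw [coeffMatrix_castLE hr hrows, coeffMatrix_castLE hr hrows, hxx']
  · rw [Matrix.det_apply] at hf
    obtain ⟨ς, -, hς⟩ := Finset.exists_ne_zero_of_sum_ne_zero hf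
    refine ⟨(Fin.castLEEmb hrn).trans ς.symm.toEmbedding, fun x => ?_⟩
    have hi : coeffMatrix M f (ς (ς.symm (Fin.castLE hrn x))) (ς.symm (Fin.castLE hrn x)) ≠ 0 :=
      fun h0 => hς (by
        rw [Finset.prod_eq_zero (f := fun i => coeffMatrix M f (ς i) i) (Finset.mem_univ _) h0,
          smul_zero])
    rw [Equiv.apply_symm_apply, coeffMatrix_castLE hr hrows] at hi
    by_contra hlt
    exact hi (PowerSeries.coeff_of_lt_order _ (by rw [hord]; exact_mod_cast not_le.mp hlt))

end Alternant

structure IsSemistandard (lam : ℕ → ℕ) (T : ℕ → ℕ → ℕ) : Prop where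
  row_le : ∀ {j c c'}, c ≤ c' → c' < lam j → T j c ≤ T j c'
  col_lt : ∀ {j j' c}, j < j' → c < lam j' → T j c < T j' c

def tableauContent (lam : ℕ → ℕ) (T : ℕ → ℕ → ℕ) (N v : ℕ) : ℕ :=
  ∑ j ∈ Finset.range N, ((Finset.range (lam j)).filter (T j · = v)).card

/-- `w ⊴ lam` in the dominance order, phrased without sorting `w`. -/
def WeaklyDominates (lam w : ℕ → ℕ) : Prop :=
  ∀ A : Finset ℕ, ∑ v ∈ A, w v ≤ ∑ i ∈ Finset.range A.card, lam i

/-- The shape left after removing `W` cells forming a horizontal strip placed as low as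
possible. -/
def removeStrip (lam : ℕ → ℕ) (W j : ℕ) : ℕ :=
  lam j - min W (lam j) + min W (lam (j + 1))

section removeStrip

variable {lam : ℕ → ℕ} (W : ℕ)

theorem removeStrip_le (hlam : Antitone lam) (j : ℕ) : removeStrip lam W j ≤ lam j := by
  have : lam (j + 1) ≤ lam j := hlam (Nat.le_succ j)
  simp only [removeStrip]
  omega

theorem le_removeStrip (hlam : Antitone lam) (j : ℕ) : lam (j + 1) ≤ removeStrip lam W j := by
  have : lam (j + 1) ≤ lam j := hlam (Nat.le_succ j)
  simp only [removeStrip]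
  omega

theorem antitone_removeStrip (hlam : Antitone lam) : Antitone (removeStrip lam W) :=
  antitone_nat_of_succ_le fun j =>
    (removeStrip_le W hlam (j + 1)).trans (le_removeStrip W hlam j)

theorem sum_range_removeStrip_add (K : ℕ) :
    ∑ j ∈ Finset.range K, removeStrip lam W j + min W (lam 0) =
      ∑ j ∈ Finset.range K, lam j + min W (lam K) := by
  induction K with
  | zero => simp
  | succ K ih =>
    have hK : removeStrip lam W K + min W (lam K) = lam K + min W (lam (K + 1)) := by
      simp only [removeStrip]
      omega
    rw [Finset.sum_range_succ, Finset.sum_range_succ]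
    omega

end removeStrip

section KostkaStep

variable {R : ℕ} {lam w : ℕ → ℕ}

theorem le_lam_zero_of_weaklyDominates (hdom : WeaklyDominates lam w) (v : ℕ) : w v ≤ lam 0 := by
  simpa using hdom {v}

theorem lam_succ_le_of_weaklyDominates (hdom : WeaklyDominates lam w)
    (htot : ∑ v ∈ Finset.range (R + 2), w v = ∑ i ∈ Finset.range (R + 2), lam i) :
    lam (R + 1) ≤ w (R + 1) := by
  have := hdom (Finset.range (R + 1))
  rw [Finset.card_range] at this
  rw [Finset.sum_range_succ, Finset.sum_range_succ (fun i => lam i)] at htot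
  omega

theorem removeStrip_eq_zero (hlam : Antitone lam) (hlam0 : ∀ j, R + 1 < j → lam j = 0)
    (hle : lam (R + 1) ≤ w (R + 1)) {j : ℕ} (hj : R < j) :
    removeStrip lam (w (R + 1)) j = 0 := by
  have h1 : lam (j + 1) = 0 := hlam0 _ (by omega)
  have h2 : lam j ≤ w (R + 1) := (hlam hj).trans hle
  simp only [removeStrip, h1]
  omega

theorem sum_range_update_eq_sum_range_removeStrip (hdom : WeaklyDominates lam w)
    (htot : ∑ v ∈ Finset.range (R + 2), w v = ∑ i ∈ Finset.range (R + 2), lam i) :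
    ∑ v ∈ Finset.range (R + 1), Function.update w (R + 1) 0 v =
      ∑ i ∈ Finset.range (R + 1), removeStrip lam (w (R + 1)) i := by
  have hle := lam_succ_le_of_weaklyDominates hdom htot
  have htel := sum_range_removeStrip_add (lam := lam) (w (R + 1)) (R + 1)
  rw [min_eq_left (le_lam_zero_of_weaklyDominates hdom _), min_eq_right hle] at htel
  rw [Finset.sum_range_succ, Finset.sum_range_succ (fun i => lam i)] at htot
  have hupd : ∑ v ∈ Finset.range (R + 1), Function.update w (R + 1) 0 v =
      ∑ v ∈ Finset.range (R + 1), w v :=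
    Finset.sum_congr rfl fun v hv => Function.update_of_ne (by simp at hv; omega) _ _
  omega

theorem weaklyDominates_removeStrip (hdom : WeaklyDominates lam w) :
    WeaklyDominates (removeStrip lam (w (R + 1))) (Function.update w (R + 1) 0) := by
  intro A
  have hA : ∑ v ∈ A, Function.update w (R + 1) 0 v = ∑ v ∈ A.erase (R + 1), w v := by
    rw [← Finset.sum_erase A (Function.update_self (R + 1) 0 w)]
    exact Finset.sum_congr rfl fun v hv => Function.update_of_ne (Finset.ne_of_mem_erase hv) _ _
  have htel := sum_range_removeStrip_add (lam := lam) (w (R + 1)) (A.erase (R + 1)).card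
  have hK : ∑ i ∈ Finset.range (A.erase (R + 1)).card, removeStrip lam (w (R + 1)) i ≤
      ∑ i ∈ Finset.range A.card, removeStrip lam (w (R + 1)) i :=
    Finset.sum_le_sum_of_subset (Finset.range_subset_range.mpr Finset.card_erase_le)
  rw [hA]
  rw [min_eq_left (le_lam_zero_of_weaklyDominates hdom _)] at htel
  rcases le_total (w (R + 1)) (lam (A.erase (R + 1)).card) with hle | hle
  · have := hdom (A.erase (R + 1))
    rw [min_eq_left hle] at htel
    omega
  · have := hdom (insert (R + 1) (A.erase (R + 1)))
    rw [Finset.sum_insert (Finset.notMem_erase _ _),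
      Finset.card_insert_of_notMem (Finset.notMem_erase _ _), Finset.sum_range_succ] at this
    rw [min_eq_right hle] at htel
    omega

end KostkaStep

section KostkaExtend

variable {lam lam' : ℕ → ℕ} {T' : ℕ → ℕ → ℕ} {N : ℕ}

theorem IsSemistandard.extend (hT' : IsSemistandard lam' T')
    (hT'N : ∀ j c, c < lam' j → T' j c < N) (hlam : Antitone lam)
    (hge : ∀ j, lam (j + 1) ≤ lam' j) :
    IsSemistandard lam fun j c => if c < lam' j then T' j c else N where
  row_le {j c c'} hcc' hc' := by
    by_cases h' : c' < lam' j
    · simp only [if_pos h', if_pos (lt_of_le_of_lt hcc' h')]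
      exact hT'.row_le hcc' h'
    · simp only [if_neg h']
      split_ifs with h
      · exact (hT'N j c h).le
      · exact le_rfl
  col_lt {j j' c} hjj' hc := by
    have hc' : c < lam' j := (hc.trans_le (hlam hjj')).trans_le (hge j)
    simp only [if_pos hc']
    split_ifs with h
    · exact hT'.col_lt hjj' h
    · exact hT'N j c hc'

theorem card_filter_extend {j : ℕ} (hle : lam' j ≤ lam j) (v : ℕ) :
    ((Finset.range (lam j)).filter fun c => (if c < lam' j then T' j c else N) = v).card =
      ((Finset.range (lam' j)).filter (T' j · = v)).card +
        if v = N then lam j - lam' j else 0 := by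
  rw [Finset.card_filter, Finset.card_filter, ← Finset.sum_range_add_sum_Ico _ hle]
  congr 1
  · refine Finset.sum_congr rfl fun c hc => ?_
    rw [if_pos (Finset.mem_range.mp hc)]
  · rw [Finset.sum_congr rfl fun c hc => by rw [if_neg (Finset.mem_Ico.mp hc).1.not_gt]]
    by_cases hv : v = N
    · simp [hv]
    · simp [hv, Ne.symm hv]

theorem tableauContent_extend (hle : ∀ j, lam' j ≤ lam j) (K v : ℕ) :
    tableauContent lam (fun j c => if c < lam' j then T' j c else N) K v =
      tableauContent lam' T' K v +
        if v = N then ∑ j ∈ Finset.range K, (lam j - lam' j) else 0 := by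
  simp only [tableauContent]
  rw [Finset.sum_congr rfl fun j _ => card_filter_extend (hle j) v, Finset.sum_add_distrib]
  split_ifs <;> simp

end KostkaExtend

theorem exists_isSemistandard_tableauContent_eq (R : ℕ) {lam w : ℕ → ℕ} (hlam : Antitone lam)
    (hlam0 : ∀ j, R < j → lam j = 0) (hw0 : ∀ v, R < v → w v = 0)
    (hdom : WeaklyDominates lam w)
    (htot : ∑ v ∈ Finset.range (R + 1), w v = ∑ i ∈ Finset.range (R + 1), lam i) :
    ∃ T, IsSemistandard lam T ∧ (∀ j c, c < lam j → T j c ≤ R) ∧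
      ∀ v, tableauContent lam T (R + 1) v = w v := by
  induction R generalizing lam w with
  | zero =>
    refine ⟨fun _ _ => 0, ⟨fun _ _ => le_rfl, fun {j j' c} hjj' hc => ?_⟩, fun _ _ _ => le_rfl,
      fun v => ?_⟩
    · rw [hlam0 j' (by omega)] at hc
      omega
    · simp only [zero_add, Finset.sum_range_one] at htot
      simp only [tableauContent]
      rcases Nat.eq_zero_or_pos v with rfl | hv
      · simp [htot]
      · simp [hw0 v hv, hv.ne]
  | succ R ih =>
    set lam' := removeStrip lam (w (R + 1))
    have hle := lam_succ_le_of_weaklyDominates hdom htot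
    have hlam'0 : ∀ j, R < j → lam' j = 0 := fun j hj => removeStrip_eq_zero hlam hlam0 hle hj
    have hw0' : ∀ v, R < v → Function.update w (R + 1) 0 v = 0 := fun v hv => by
      rcases eq_or_ne v (R + 1) with rfl | h
      · simp
      · rw [Function.update_of_ne h, hw0 v (by omega)]
    obtain ⟨T', hT', hT'R, hcont⟩ := ih (antitone_removeStrip _ hlam) hlam'0 hw0'
      (weaklyDominates_removeStrip hdom) (sum_range_update_eq_sum_range_removeStrip hdom htot)
    refine ⟨_, hT'.extend (fun j c hc => Nat.lt_succ_of_le (hT'R j c hc)) hlam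
      (le_removeStrip _ hlam), fun j c _ => ?_, fun v => ?_⟩
    · split_ifs with h
      · exact (hT'R j c h).trans (Nat.le_succ R)
      · exact le_rfl
    · have hstrip : ∑ j ∈ Finset.range (R + 2), (lam j - lam' j) = w (R + 1) := by
        have htel := sum_range_removeStrip_add (lam := lam) (w (R + 1)) (R + 2)
        rw [min_eq_left (le_lam_zero_of_weaklyDominates hdom _), hlam0 (R + 2) (by omega),
          min_zero] at htel
        rw [Finset.sum_tsub_distrib _ fun j _ => removeStrip_le _ hlam j]
        omega
      have hrow : tableauContent lam' T' (R + 2) v = tableauContent lam' T' (R + 1) v := by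
        simp [tableauContent, Finset.sum_range_succ _ (R + 1), hlam'0 (R + 1) (by omega)]
      rw [tableauContent_extend (removeStrip_le _ hlam), hrow, hcont, hstrip]
      rcases eq_or_ne v (R + 1) with rfl | hv
      · simp
      · simp [hv]

section ShiftFilling

variable {n r : ℕ} {μ : YoungDiagram} {lam : ℕ → ℕ} {T' : ℕ → ℕ → ℕ}

/-- Row `j` of a filling `T'` of `lam` is kept in row `j` of `μ` as far as the row
`j + (n - r)` of `μ` reaches; the remaining cells of each column are filled from the bottom
with `n, n - 1, …`. -/
def shiftFilling (n r : ℕ) (μ : YoungDiagram) (T' : ℕ → ℕ → ℕ) (j c : ℕ) : ℕ :=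
  if j + (n - r) < μ.colLen c then T' j c else n + 1 + j - μ.colLen c

theorem colLen_le_of_forall_rowLen_eq_zero (hμ' : ∀ l, n + 1 ≤ l → μ.rowLen l = 0) (c : ℕ) :
    μ.colLen c ≤ n + 1 := by
  by_contra h
  have := YoungDiagram.mem_iff_lt_rowLen.mp (YoungDiagram.mem_iff_lt_colLen.mpr (not_le.mp h))
  rw [hμ' (n + 1) le_rfl] at this
  omega

theorem lt_lam_of_lt_colLen (hκ : ∀ j, μ.rowLen (j + (n - r)) ≤ lam j) {j c : ℕ}
    (h : j + (n - r) < μ.colLen c) : c < lam j :=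
  (YoungDiagram.mem_iff_lt_rowLen.mp (YoungDiagram.mem_iff_lt_colLen.mpr h)).trans_le (hκ j)

theorem shiftFilling_lt (hr : r ≤ n) (hT'r : ∀ j c, c < lam j → T' j c ≤ r)
    (hκ : ∀ j, μ.rowLen (j + (n - r)) ≤ lam j) {j c : ℕ} (hjc : (j, c) ∈ μ) :
    shiftFilling n r μ T' j c < n + 1 := by
  have := YoungDiagram.mem_iff_lt_colLen.mp hjc
  unfold shiftFilling
  split_ifs with h
  · have := hT'r j c (lt_lam_of_lt_colLen hκ h)
    omega
  · omega

theorem lt_colLen_of_shiftFilling_le (hr : r ≤ n) {j c : ℕ} (hjc : (j, c) ∈ μ)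
    (h : shiftFilling n r μ T' j c ≤ r) : j + (n - r) < μ.colLen c := by
  have := YoungDiagram.mem_iff_lt_colLen.mp hjc
  unfold shiftFilling at h
  split_ifs at h with h'
  · exact h'
  · omega

theorem shiftFilling_le_shiftFilling (hr : r ≤ n) (hT' : IsSemistandard lam T')
    (hT'r : ∀ j c, c < lam j → T' j c ≤ r) (hκ : ∀ j, μ.rowLen (j + (n - r)) ≤ lam j)
    {j c c' : ℕ} (hcc' : c ≤ c') (hjc' : (j, c') ∈ μ) :
    shiftFilling n r μ T' j c ≤ shiftFilling n r μ T' j c' := by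
  have h1 := YoungDiagram.mem_iff_lt_colLen.mp hjc'
  have h2 := μ.colLen_anti _ _ hcc'
  unfold shiftFilling
  split_ifs with h h'
  · exact hT'.row_le hcc' (lt_lam_of_lt_colLen hκ h')
  · have := hT'r j c (lt_lam_of_lt_colLen hκ h)
    omega
  · omega
  · omega

theorem shiftFilling_lt_shiftFilling (hr : r ≤ n) (hμ' : ∀ l, n + 1 ≤ l → μ.rowLen l = 0)
    (hT' : IsSemistandard lam T') (hT'r : ∀ j c, c < lam j → T' j c ≤ r)
    (hκ : ∀ j, μ.rowLen (j + (n - r)) ≤ lam j) {j j' c : ℕ} (hjj' : j < j')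
    (hj'c : (j', c) ∈ μ) : shiftFilling n r μ T' j c < shiftFilling n r μ T' j' c := by
  have h1 := YoungDiagram.mem_iff_lt_colLen.mp hj'c
  have h2 := colLen_le_of_forall_rowLen_eq_zero hμ' c
  unfold shiftFilling
  split_ifs with h h'
  · exact hT'.col_lt hjj' (lt_lam_of_lt_colLen hκ h')
  · have := hT'r j c (lt_lam_of_lt_colLen hκ h)
    omega
  · omega
  · omega

end ShiftFilling

section SchurSupport

variable {n r : ℕ} {μ : YoungDiagram}

noncomputable def ssytFillings (n : ℕ) (μ : YoungDiagram) : Finset (μ.cells → Fin (n + 1)) :=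
  Finset.univ.filter
      (fun T : μ.cells → Fin (n + 1) =>
        (∀ c c' : μ.cells, (c : ℕ × ℕ).1 = (c' : ℕ × ℕ).1 →
          (c : ℕ × ℕ).2 ≤ (c' : ℕ × ℕ).2 → T c ≤ T c') ∧
        (∀ c c' : μ.cells, (c : ℕ × ℕ).2 = (c' : ℕ × ℕ).2 →
          (c : ℕ × ℕ).1 < (c' : ℕ × ℕ).1 → T c < T c'))

noncomputable def specializedContent (n r : ℕ) (μ : YoungDiagram)
    (T : μ.cells → Fin (n + 1)) : Fin (r + 1) →₀ ℕ :=
  ∑ c, if h : (T c : ℕ) < r + 1 then Finsupp.single ⟨T c, h⟩ 1 else 0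

theorem specializedContent_apply (T : μ.cells → Fin (n + 1)) (x : Fin (r + 1)) :
    specializedContent n r μ T x = (Finset.univ.filter fun c => (T c : ℕ) = x).card := by
  rw [specializedContent, Finsupp.finsetSum_apply, Finset.card_filter]
  refine Finset.sum_congr rfl fun c _ => ?_
  split_ifs with h h' h'
  · simp [h']
  · simp [Fin.ext_iff, h']
  · omega
  · rfl

theorem specializeLast_schurPoly :
    specializeLast n r (schurPoly n μ) =
      ∑ T ∈ ssytFillings n μ, MvPolynomial.monomial (specializedContent n r μ T) 1 := by
  rw [schurPoly, map_sum]
  refine Finset.sum_congr rfl fun T _ => ?_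
  rw [map_prod, specializedContent, MvPolynomial.monomial_sum_one]
  refine Finset.prod_congr rfl fun c _ => ?_
  rw [specializeLast, aeval_X]
  split_ifs
  · rfl
  · simp

theorem specializedContent_mem_support {T : μ.cells → Fin (n + 1)}
    (hT : T ∈ ssytFillings n μ) :
    specializedContent n r μ T ∈ (specializeLast n r (schurPoly n μ)).support := by
  rw [MvPolynomial.mem_support_iff, specializeLast_schurPoly, MvPolynomial.coeff_sum]
  simp only [MvPolynomial.coeff_monomial]
  refine (Finset.sum_pos' (fun _ _ => by split_ifs <;> norm_num) ⟨T, hT, by simp⟩).ne'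

end SchurSupport

theorem exists_mem_ssytFillings_specializedContent_le {n r : ℕ} (hr : r ≤ n) {μ : YoungDiagram}
    (hμ' : ∀ l, n + 1 ≤ l → μ.rowLen l = 0) {lam : ℕ → ℕ} {T' : ℕ → ℕ → ℕ}
    (hT' : IsSemistandard lam T') (hT'r : ∀ j c, c < lam j → T' j c ≤ r)
    (hκ : ∀ j, μ.rowLen (j + (n - r)) ≤ lam j) :
    ∃ T ∈ ssytFillings n μ, ∀ x : Fin (r + 1),
      specializedContent n r μ T x ≤ tableauContent lam T' (r + 1) x := by
  have hmem : ∀ c : μ.cells, ((c : ℕ × ℕ).1, (c : ℕ × ℕ).2) ∈ μ := fun c =>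
    (YoungDiagram.mem_cells _).mp c.2
  set T : μ.cells → Fin (n + 1) := fun c =>
    ⟨shiftFilling n r μ T' (c : ℕ × ℕ).1 (c : ℕ × ℕ).2, shiftFilling_lt hr hT'r hκ (hmem c)⟩
  refine ⟨T, Finset.mem_filter.mpr ⟨Finset.mem_univ _, fun c c' hrow hle => ?_,
    fun c c' hcol hlt => ?_⟩, fun x => ?_⟩
  · change shiftFilling n r μ T' _ _ ≤ shiftFilling n r μ T' _ _
    rw [hrow]
    exact shiftFilling_le_shiftFilling hr hT' hT'r hκ hle (hmem c')
  · change shiftFilling n r μ T' _ _ < shiftFilling n r μ T' _ _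
    rw [hcol]
    exact shiftFilling_lt_shiftFilling hr hμ' hT' hT'r hκ hlt (hmem c')
  · rw [specializedContent_apply, tableauContent, ← Finset.card_sigma]
    refine Finset.card_le_card_of_injOn (fun c => ⟨(c : ℕ × ℕ).1, (c : ℕ × ℕ).2⟩) ?_ ?_
    · intro c hc
      have hx : shiftFilling n r μ T' (c : ℕ × ℕ).1 (c : ℕ × ℕ).2 = x :=
        (Finset.mem_filter.mp hc).2
      have hkept := lt_colLen_of_shiftFilling_le hr (hmem c)
        (hx.trans_le (Nat.lt_succ_iff.mp x.isLt))
      have := colLen_le_of_forall_rowLen_eq_zero hμ' (c : ℕ × ℕ).2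
      simp only [Finset.coe_sigma, Set.mem_sigma_iff, Finset.coe_range, Set.mem_Iio,
        Finset.coe_filter, Finset.mem_range]
      refine ⟨by omega, lt_lam_of_lt_colLen hκ hkept, ?_⟩
      rwa [shiftFilling, if_pos hkept] at hx
    · intro c _ c' _ h
      simp only [Sigma.mk.inj_iff, heq_eq_eq] at h
      exact Subtype.ext (Prod.ext h.1 h.2)

section SortedExponent

variable {r : ℕ} {f : Fin (r + 1) → ℕ} {ζ : Equiv.Perm (Fin (r + 1))}

theorem natExtend_succ_lt (hf : Function.Injective f) (hζ : Antitone (f ∘ ζ)) {j : ℕ}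
    (hj : j < r) : natExtend (f ∘ ζ) (j + 1) < natExtend (f ∘ ζ) j := by
  have hle : natExtend (f ∘ ζ) (j + 1) ≤ natExtend (f ∘ ζ) j :=
    antitone_natExtend hζ (Nat.le_succ j)
  have hne : natExtend (f ∘ ζ) (j + 1) ≠ natExtend (f ∘ ζ) j := by
    simp only [natExtend, dif_pos (show j + 1 < r + 1 by omega),
      dif_pos (show j < r + 1 by omega), Function.comp_apply]
    exact fun h => by simpa [Fin.ext_iff] using ζ.injective (hf h)
  omega

theorem sub_le_natExtend (hf : Function.Injective f) (hζ : Antitone (f ∘ ζ)) (j : ℕ) :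
    r - j ≤ natExtend (f ∘ ζ) j := by
  rcases le_or_gt j r with hj | hj
  · have := apply_add_le_apply_add_of_succ_lt (fun _ => natExtend_succ_lt hf hζ) hj le_rfl
    omega
  · omega

theorem antitone_natExtend_sub (hf : Function.Injective f) (hζ : Antitone (f ∘ ζ)) :
    Antitone fun j => natExtend (f ∘ ζ) j - (r - j) := by
  intro i j hij
  rcases le_or_gt j r with hj | hj
  · have := apply_add_le_apply_add_of_succ_lt (fun _ => natExtend_succ_lt hf hζ) hij hj
    have := sub_le_natExtend hf hζ i
    have := sub_le_natExtend hf hζ j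
    simp only
    omega
  · simp [natExtend_of_le _ hj]

/-- The `x`-th largest value of `f` is at least `m (x + (n - r))`: otherwise `em` would map the
`r + 1 - x` positions of the smallest values of `f` into the `r - x` indices beyond
`x + (n - r)`. -/
theorem le_comp_perm_of_embedding {n : ℕ} {m : Fin (n + 1) → ℕ} (hm : StrictAnti m)
    (em : Fin (r + 1) ↪ Fin (n + 1)) (hem : ∀ x, m (em x) ≤ f x) (hζ : Antitone (f ∘ ζ))
    (x : Fin (r + 1)) (hx : ↑x + (n - r) < n + 1) : m ⟨x + (n - r), hx⟩ ≤ f (ζ x) := by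
  by_contra hlt
  have hmap : ∀ y ∈ Finset.Ici x, em (ζ y) ∈ Finset.Ioi (⟨x + (n - r), hx⟩ : Fin (n + 1)) := by
    intro y hy
    have := (hem (ζ y)).trans (hζ (Finset.mem_Ici.mp hy))
    exact Finset.mem_Ioi.mpr (hm.lt_iff_gt.mp (by simp only [Function.comp_apply] at this; omega))
  have := Finset.card_le_card_of_injOn _ hmap fun y _ y' _ h => ζ.injective (em.injective h)
  simp only [Fin.card_Ici, Fin.card_Ioi] at this
  omega

theorem rowLen_le_natExtend_sub {n : ℕ} (hr : r ≤ n) {m : Fin (n + 1) → ℕ} (hm : StrictAnti m)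
    {μ : YoungDiagram} (hμ : ∀ i : Fin (n + 1), μ.rowLen i = m i - (n - (i : ℕ)))
    (hμ' : ∀ l : ℕ, n + 1 ≤ l → μ.rowLen l = 0) (em : Fin (r + 1) ↪ Fin (n + 1))
    (hem : ∀ x, m (em x) ≤ f x) (hζ : Antitone (f ∘ ζ)) (j : ℕ) :
    μ.rowLen (j + (n - r)) ≤ natExtend (f ∘ ζ) j - (r - j) := by
  rcases lt_or_ge j (r + 1) with hj | hj
  · have hx : j + (n - r) < n + 1 := by omega
    have h1 := hμ ⟨j + (n - r), hx⟩
    have h2 := le_comp_perm_of_embedding hm em hem hζ ⟨j, hj⟩ hx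
    have h3 : natExtend (f ∘ ζ) j = f (ζ ⟨j, hj⟩) := natExtend_val (f ∘ ζ) ⟨j, hj⟩
    simp only at h1 h2
    rw [h1, h3]
    omega
  · rw [hμ' _ (by omega)]
    exact Nat.zero_le _

end SortedExponent

theorem exists_mem_ssytFillings_specializedContent_le_of_dominated {n r : ℕ} (hr : r ≤ n)
    {m : Fin (n + 1) → ℕ} (hm : StrictAnti m) {μ : YoungDiagram}
    (hμ : ∀ i : Fin (n + 1), μ.rowLen i = m i - (n - (i : ℕ)))
    (hμ' : ∀ l : ℕ, n + 1 ≤ l → μ.rowLen l = 0)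
    {e f : Fin (r + 1) → ℕ} {ρ : Equiv.Perm (Fin (r + 1))} (hρ : Antitone (e ∘ ρ))
    (hf : Function.Injective f) (em : Fin (r + 1) ↪ Fin (n + 1)) (hem : ∀ x, m (em x) ≤ f x)
    (htot : ∑ i, f i = ∑ i, e i + ∑ j ∈ Finset.range (r + 1), (r - j))
    (hpre : ∀ k, ∑ j ∈ Finset.range k, natExtend (e ∘ ρ) j + ∑ j ∈ Finset.range k, (r - j) ≤
      ∑ j ∈ Finset.range k, natExtend (f ∘ ρ) j) :
    ∃ T ∈ ssytFillings n μ, ∀ x, specializedContent n r μ T x ≤ e x := by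
  obtain ⟨ζ, hζ⟩ := exists_antitone_comp_perm f
  have hstair := sub_le_natExtend hf hζ
  set lam := fun j => natExtend (f ∘ ζ) j - (r - j)
  have hprefix : ∀ k, ∑ j ∈ Finset.range k, natExtend (e ∘ ρ) j ≤ ∑ j ∈ Finset.range k, lam j :=
    fun k => by
      have hcomp : (f ∘ ρ) ∘ (ζ.trans ρ.symm) = f ∘ ζ := by
        ext x
        simp
      have h1 := hpre k
      have h2 := sum_natExtend_le_sum_range_card (f ∘ ρ) (π := ζ.trans ρ.symm) (hcomp ▸ hζ)
        (Finset.range k)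
      rw [Finset.card_range, hcomp] at h2
      have h3 : ∑ j ∈ Finset.range k, lam j + ∑ j ∈ Finset.range k, (r - j) =
          ∑ j ∈ Finset.range k, natExtend (f ∘ ζ) j := sum_range_sub_add_sum_range hstair k
      omega
  have htot' : ∑ v ∈ Finset.range (r + 1), natExtend e v =
      ∑ j ∈ Finset.range (r + 1), lam j := by
    have h1 : ∑ j ∈ Finset.range (r + 1), lam j + ∑ j ∈ Finset.range (r + 1), (r - j) =
        ∑ i, f i := by
      rw [sum_range_sub_add_sum_range hstair, sum_range_natExtend_self]
      exact Equiv.sum_comp ζ f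
    rw [sum_range_natExtend_self]
    omega
  obtain ⟨T', hT', hT'r, hcont⟩ := exists_isSemistandard_tableauContent_eq r
    (antitone_natExtend_sub hf hζ) (fun j hj => by simp [natExtend_of_le _ hj])
    (fun v hv => natExtend_of_le e hv)
    (fun A => (sum_natExtend_le_sum_range_card e hρ A).trans (hprefix _)) htot'
  obtain ⟨T, hT, hTle⟩ := exists_mem_ssytFillings_specializedContent_le hr hμ' hT' hT'r
    (rowLen_le_natExtend_sub hr hm hμ hμ' em hem hζ)
  refine ⟨T, hT, fun x => (hTle x).trans ?_⟩
  rw [hcont x, natExtend_val]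

/-- If the vanishing orders `m_i = ord_t(p_i)` are strictly decreasing, then
the cofactor `g` with `det M = g ⬝ ∏_{i<j}(x_i - x_j)` lies in the ideal of
`B[[x_0,…,x_r]]` generated by the monomials of `σ_m(x_0,…,x_r,1,…,1)`. -/
theorem stmt5 {B : Type*} [CommRing B] (n r : ℕ) (hr : r ≤ n)
    (p : Fin (n + 1) → PowerSeries B)
    (M : Matrix (Fin (n + 1)) (Fin (n + 1)) (MvPowerSeries (Fin (r + 1)) B))
    (hrows : ∀ i : Fin (n + 1), ∀ h : (i : ℕ) < r + 1, ∀ j : Fin (n + 1),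
      M i j = evalAtVar (⟨(i : ℕ), h⟩ : Fin (r + 1)) (p j))
    (hconst : ∀ i : Fin (n + 1), r + 1 ≤ (i : ℕ) → ∀ j : Fin (n + 1),
      ∃ b : B, M i j = MvPowerSeries.C (σ := Fin (r + 1)) (R := B) b)
    (m : Fin (n + 1) → ℕ)
    (hm : ∀ i j : Fin (n + 1), i < j → m j < m i)
    (hord : ∀ i : Fin (n + 1), (p i).order = (m i : ℕ∞))
    (μ : YoungDiagram)
    (hμ : ∀ i : Fin (n + 1), μ.rowLen i = m i - (n - (i : ℕ)))
    (hμ' : ∀ l : ℕ, n + 1 ≤ l → μ.rowLen l = 0)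
    (g : MvPowerSeries (Fin (r + 1)) B)
    (hg : M.det = g * ∏ i : Fin (r + 1), ∏ j ∈ Finset.Ioi i,
      (MvPowerSeries.X i - MvPowerSeries.X j)) :
    g ∈ Ideal.span { x : MvPowerSeries (Fin (r + 1)) B |
      ∃ d ∈ (specializeLast n r (schurPoly n μ)).support,
        x = ∏ i : Fin (r + 1), (MvPowerSeries.X i) ^ (d i) } := by
  have hgen : { x : MvPowerSeries (Fin (r + 1)) B |
      ∃ d ∈ (specializeLast n r (schurPoly n μ)).support,
        x = ∏ i : Fin (r + 1), (MvPowerSeries.X i) ^ (d i) } =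
      (fun d => MvPowerSeries.monomial d 1) '' ↑(specializeLast n r (schurPoly n μ)).support := by
    ext x
    simp [MvPowerSeries.prod_X_pow_eq_monomial, eq_comm]
  rw [hgen]
  refine MvPowerSeries.mem_span_monomial_of_forall_exists_le _ fun e he => ?_
  obtain ⟨ρ, hρ⟩ := exists_antitone_comp_perm e
  obtain ⟨f, hf, htot, hpre⟩ :=
    MvPowerSeries.exists_dominating_of_eq_mul_prod_X_sub_X hg he ρ
  obtain ⟨hinj, em, hem⟩ :=
    injective_and_exists_embedding_of_coeff_det_ne_zero hr hrows hconst hord hf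
  obtain ⟨T, hT, hTe⟩ := exists_mem_ssytFillings_specializedContent_le_of_dominated hr hm hμ hμ'
    hρ hinj em hem htot hpre
  exact ⟨_, specializedContent_mem_support hT, Finsupp.le_def.mpr hTe⟩
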